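/- arXiv:0902.4098 — 3 statements merged into one kernel-verified Lean document; each statement's English description precedes it below -/
import Mathlib

section
/- For the normalized matrix of maximum out-forests J̄ of a weighted digraph, for all vertices i, j: J̄_{ii} ≥ J̄_{ji}, and if J̄_{ij} > 0 then J̄_{ii} = J̄_{ji}. -/
open Finset

variable {n : ℕ}

/-- Kirchhoff (Laplacian) matrix of the weighted digraph whose arc `(j, i)`
has weight `a i j` (so `a i j` is the weight with which agent `i` accounts for `j`). -/
noncomputable def kirchhoff (a : Matrix (Fin n) (Fin n) ℝ) : Matrix (Fin n) (Fin n) ℝ :=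
  Matrix.of fun i j => if i = j then ∑ k ∈ Finset.univ.erase i, a i k else -a i j

/-- `F` is a spanning diverging forest (out-forest) of the digraph with arcs
`u → v` present iff `a v u > 0`: every arc of `F` is an arc of the digraph,
every vertex has in-degree at most one in `F`, and `F` has no directed cycles
(equivalently, no infinite directed walk). -/
def IsOutForest (a : Matrix (Fin n) (Fin n) ℝ) (F : Finset (Fin n × Fin n)) : Prop :=
  (∀ e ∈ F, 0 < a e.2 e.1) ∧
  (∀ u u' v : Fin n, (u, v) ∈ F → (u', v) ∈ F → u = u') ∧
  ¬ ∃ f : ℕ → Fin n, ∀ k, (f k, f (k + 1)) ∈ F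

/-- Number of arcs of a maximum out-forest. -/
noncomputable def maxForestSize (a : Matrix (Fin n) (Fin n) ℝ) : ℕ :=
  sSup {k | ∃ F, IsOutForest a F ∧ F.card = k}

/-- The out-forest dimension: the number of trees in any maximum out-forest. -/
noncomputable def outForestDim (a : Matrix (Fin n) (Fin n) ℝ) : ℕ :=
  n - maxForestSize a

open Classical in
/-- The set of maximum out-forests. -/
noncomputable def maxForests (a : Matrix (Fin n) (Fin n) ℝ) :
    Finset (Finset (Fin n × Fin n)) :=
  Finset.univ.filter fun F => IsOutForest a F ∧ F.card = maxForestSize a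

/-- The weight of a forest: the product of its arc weights. -/
def forestWeight (a : Matrix (Fin n) (Fin n) ℝ) (F : Finset (Fin n × Fin n)) : ℝ :=
  ∏ e ∈ F, a e.2 e.1

/-- In forest `F`, vertex `i` belongs to the tree diverging from (rooted at) `j`. -/
def InTreeRootedAt (F : Finset (Fin n × Fin n)) (j i : Fin n) : Prop :=
  (∀ u, (u, j) ∉ F) ∧ Relation.ReflTransGen (fun x y => (x, y) ∈ F) j i

open Classical in
/-- The normalized matrix of maximum out-forests. -/
noncomputable def barJ (a : Matrix (Fin n) (Fin n) ℝ) : Matrix (Fin n) (Fin n) ℝ :=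
  Matrix.of fun i j =>
    (∑ F ∈ (maxForests a).filter (fun F => InTreeRootedAt F j i), forestWeight a F) /
    (∑ F ∈ maxForests a, forestWeight a F)

/-- Reachability by directed paths (arc `u → v` present iff `a v u > 0`). -/
def Reach (a : Matrix (Fin n) (Fin n) ℝ) (u v : Fin n) : Prop :=
  Relation.ReflTransGen (fun x y => 0 < a y x) u v

/-- The strong component (bicomponent) of vertex `v`. -/
def strongClass (a : Matrix (Fin n) (Fin n) ℝ) (v : Fin n) : Set (Fin n) :=
  {u | Reach a u v ∧ Reach a v u}

/-- The set of strong components. -/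
def strongClasses (a : Matrix (Fin n) (Fin n) ℝ) : Set (Set (Fin n)) :=
  {S | ∃ v, S = strongClass a v}

/-- Basis bicomponents: strong components with no arcs entering from outside. -/
def basisClasses (a : Matrix (Fin n) (Fin n) ℝ) : Set (Set (Fin n)) :=
  {S | (∃ v, S = strongClass a v) ∧ ∀ u v, u ∉ S → v ∈ S → ¬ 0 < a v u}

/-- Weak reachability (underlying undirected graph). -/
def WeakReach (a : Matrix (Fin n) (Fin n) ℝ) (u v : Fin n) : Prop :=
  Relation.ReflTransGen (fun x y => 0 < a y x ∨ 0 < a x y) u v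

/-- The set of weak components. -/
def weakClasses (a : Matrix (Fin n) (Fin n) ℝ) : Set (Set (Fin n)) :=
  {S | ∃ v, S = {u | WeakReach a u v}}

/-!
Every root of a maximum out-forest lies in a basis bicomponent, and every basis bicomponent
contains exactly one root: a forest with `m` arcs has `n - m` roots, every basis bicomponent
contains the root of the tree of any of its vertices, and a breadth-first forest grown from one
vertex of each basis bicomponent attains this bound.

Hence if `j` is a root of a maximum forest whose `j`-tree contains `i`, then `i` lies in the basis
bicomponent of `j`, and in any maximum forest rooted at `i` the root of the tree of `j` lies in
that bicomponent, so it is `i`. The forests counted by `J̄_{ii}` are then exactly those counted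
by `J̄_{ji}`.
-/

theorem WellFounded.swap_of_finite {α : Type*} [Finite α] {r : α → α → Prop}
    (h : WellFounded r) : WellFounded (Function.swap r) := by
  have hirr : Std.Irrefl (Relation.TransGen (Function.swap r)) :=
    ⟨fun x hx => h.transGen.irrefl.irrefl x (Relation.transGen_swap.mp hx)⟩
  exact Subrelation.wf Relation.TransGen.single (Finite.wellFounded_of_trans_of_irrefl _)

section

open scoped Classical

variable {a : Matrix (Fin n) (Fin n) ℝ} {F G : Finset (Fin n × Fin n)}

def rootsOf (F : Finset (Fin n × Fin n)) : Finset (Fin n) :=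
  univ.filter fun v => ∀ u, (u, v) ∉ F

theorem mem_rootsOf {v : Fin n} : v ∈ rootsOf F ↔ ∀ u, (u, v) ∉ F := by
  simp [rootsOf]

namespace IsOutForest

theorem forestWeight_nonneg (hF : IsOutForest a F) : 0 ≤ forestWeight a F :=
  prod_nonneg fun e he => (hF.1 e he).le

theorem reach_of_reflTransGen (hF : IsOutForest a F) {u v : Fin n}
    (h : Relation.ReflTransGen (fun x y => (x, y) ∈ F) u v) : Reach a u v :=
  Relation.ReflTransGen.mono (fun x y hxy => hF.1 (x, y) hxy) _ _ h

theorem wellFounded_parent (hF : IsOutForest a F) : WellFounded fun x y => (x, y) ∈ F := by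
  refine WellFounded.swap_of_finite (wellFounded_iff_isEmpty_descending_chain.mpr ⟨?_⟩)
  exact fun f => hF.2.2 ⟨f.1, f.2⟩

theorem exists_root_reflTransGen (hF : IsOutForest a F) (v : Fin n) :
    ∃ r ∈ rootsOf F, Relation.ReflTransGen (fun x y => (x, y) ∈ F) r v := by
  obtain ⟨r, hrv, hmin⟩ := hF.wellFounded_parent.has_min
    {u | Relation.ReflTransGen (fun x y => (x, y) ∈ F) u v} ⟨v, .refl⟩
  exact ⟨r, mem_rootsOf.mpr fun u hu => hmin u (.head hu hrv) hu, hrv⟩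

/-- Each non-root is the head of exactly one arc. -/
theorem card_add_card_rootsOf (hF : IsOutForest a F) : #F + #(rootsOf F) = n := by
  have himage : F.image Prod.snd = (rootsOf F)ᶜ := by
    ext v
    simp only [mem_image, mem_compl, mem_rootsOf, not_forall, not_not]
    exact ⟨fun ⟨e, he, hv⟩ => ⟨e.1, hv ▸ he⟩, fun ⟨u, hu⟩ => ⟨(u, v), hu, rfl⟩⟩
  have hinj : Set.InjOn Prod.snd (F : Set (Fin n × Fin n)) := fun e he e' he' h =>
    Prod.ext (hF.2.1 e.1 e'.1 e.2 he (h ▸ he')) h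
  rw [← card_image_of_injOn hinj, himage, card_compl, Fintype.card_fin]
  have := card_le_univ (rootsOf F)
  simp only [Fintype.card_fin] at this
  omega

end IsOutForest

theorem card_le_maxForestSize (hF : IsOutForest a F) : #F ≤ maxForestSize a := by
  refine le_csSup ⟨n * n, ?_⟩ ⟨F, hF, rfl⟩
  rintro k ⟨G, -, rfl⟩
  simpa using card_le_univ G

theorem mem_maxForests : F ∈ maxForests a ↔ IsOutForest a F ∧ #F = maxForestSize a := by
  simp [maxForests]

def IsBasisVertex (a : Matrix (Fin n) (Fin n) ℝ) (v : Fin n) : Prop :=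
  ∀ u, Reach a u v → Reach a v u

theorem IsBasisVertex.of_reach {v w : Fin n} (hv : IsBasisVertex a v) (hwv : Reach a w v) :
    IsBasisVertex a w :=
  fun u hu => hwv.trans (hv u (hu.trans hwv))

theorem exists_isBasisVertex_reach (u : Fin n) : ∃ v, IsBasisVertex a v ∧ Reach a v u := by
  let before : Fin n → Fin n → Prop := fun v w => Reach a v w ∧ ¬ Reach a w v
  have : IsTrans (Fin n) before :=
    ⟨fun _ _ _ h h' => ⟨h.1.trans h'.1, fun h'' => h.2 (h'.1.trans h'')⟩⟩
  have : Std.Irrefl before := ⟨fun _ h => h.2 .refl⟩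
  obtain ⟨v, hvu, hmin⟩ := (Finite.wellFounded_of_trans_of_irrefl before).has_min
    {v | Reach a v u} ⟨u, .refl⟩
  exact ⟨v, fun w hwv => by_contra fun hvw => hmin w (hwv.trans hvu) ⟨hwv, hvw⟩, hvu⟩

theorem mem_strongClass_self (v : Fin n) : v ∈ strongClass a v := ⟨.refl, .refl⟩

theorem strongClass_eq_iff {u v : Fin n} :
    strongClass a u = strongClass a v ↔ Reach a u v ∧ Reach a v u := by
  refine ⟨fun h => (h ▸ mem_strongClass_self u : u ∈ strongClass a v), fun ⟨huv, hvu⟩ => ?_⟩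
  ext w
  exact ⟨fun ⟨hwu, huw⟩ => ⟨hwu.trans huv, hvu.trans huw⟩,
    fun ⟨hwv, hvw⟩ => ⟨hwv.trans hvu, huv.trans hvw⟩⟩

noncomputable def basisClassFinset (a : Matrix (Fin n) (Fin n) ℝ) : Finset (Set (Fin n)) :=
  (univ.filter (IsBasisVertex a)).image (strongClass a)

theorem strongClass_mem_basisClassFinset {v : Fin n} (hv : IsBasisVertex a v) :
    strongClass a v ∈ basisClassFinset a :=
  mem_image_of_mem _ (mem_filter.mpr ⟨mem_univ v, hv⟩)

theorem IsOutForest.surjOn_strongClass_rootsOf (hF : IsOutForest a F) :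
    Set.SurjOn (strongClass a) ((rootsOf F).filter (IsBasisVertex a)) (basisClassFinset a) := by
  intro C hC
  obtain ⟨v, hv, rfl⟩ := mem_image.mp hC
  obtain ⟨r, hr, hrv⟩ := hF.exists_root_reflTransGen v
  have hrv : Reach a r v := hF.reach_of_reflTransGen hrv
  have hv : IsBasisVertex a v := (mem_filter.mp hv).2
  exact ⟨r, mem_filter.mpr ⟨hr, hv.of_reach hrv⟩, strongClass_eq_iff.mpr ⟨hrv, hv r hrv⟩⟩

def ReachIn (a : Matrix (Fin n) (Fin n) ℝ) (S : Finset (Fin n)) : ℕ → Fin n → Prop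
  | 0, u => u ∈ S
  | k + 1, u => ∃ p, 0 < a u p ∧ ReachIn a S k p

theorem exists_reachIn_of_reach {S : Finset (Fin n)} {s u : Fin n} (hs : s ∈ S)
    (h : Reach a s u) : ∃ k, ReachIn a S k u := by
  induction h with
  | refl => exact ⟨0, hs⟩
  | tail _ hvw ih =>
    obtain ⟨k, hk⟩ := ih
    exact ⟨k + 1, _, hvw, hk⟩

/-- Breadth-first search from `S`: every vertex outside `S` gets as parent a vertex one step
closer to `S`. -/
theorem exists_isOutForest_of_reach (S : Finset (Fin n)) (hS : ∀ u, ∃ s ∈ S, Reach a s u) :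
    ∃ F, IsOutForest a F ∧ #F + #S = n := by
  have hex : ∀ u, ∃ k, ReachIn a S k u := fun u =>
    let ⟨_, hs, h⟩ := hS u
    exists_reachIn_of_reach hs h
  have hparent : ∀ u ∉ S, ∃ p, 0 < a u p ∧ Nat.find (hex p) < Nat.find (hex u) := by
    intro u hu
    obtain ⟨k, hk⟩ : ∃ k, Nat.find (hex u) = k + 1 :=
      Nat.exists_eq_succ_of_ne_zero fun h0 => by
        simpa [h0, ReachIn, hu] using Nat.find_spec (hex u)
    obtain ⟨p, hup, hp⟩ : ReachIn a S (k + 1) u := hk ▸ Nat.find_spec (hex u)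
    exact ⟨p, hup, (Nat.find_min' (hex p) hp).trans_lt (hk ▸ k.lt_succ_self)⟩
  choose! parent hparent_pos hparent_lt using hparent
  set F := Sᶜ.image fun u => (parent u, u)
  have hmem : ∀ u v, (u, v) ∈ F ↔ v ∉ S ∧ parent v = u := by
    intro u v
    simp only [F, mem_image, mem_compl, Prod.mk.injEq]
    exact ⟨fun ⟨w, hw, hwu, hwv⟩ => hwv ▸ ⟨hw, hwu⟩, fun ⟨hv, hvu⟩ => ⟨v, hv, hvu, rfl⟩⟩
  refine ⟨F, ⟨fun e he => ?_, fun u u' v hu hu' => ?_, fun ⟨f, hf⟩ => ?_⟩, ?_⟩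
  · obtain ⟨hv, hpar⟩ := (hmem e.1 e.2).mp he
    exact hpar ▸ hparent_pos _ hv
  · exact ((hmem u v).mp hu).2.symm.trans ((hmem u' v).mp hu').2
  · have hlt : ∀ k, Nat.find (hex (f k)) < Nat.find (hex (f (k + 1))) := fun k => by
      obtain ⟨hv, hpar⟩ := (hmem _ _).mp (hf k)
      exact hpar ▸ hparent_lt _ hv
    exact not_injective_infinite_finite f
      (Function.Injective.of_comp (f := fun u => Nat.find (hex u))
        (strictMono_nat_of_lt_succ hlt).injective)
  · rw [card_image_of_injective _ fun u v h => (Prod.mk.inj h).2, card_compl,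
      Fintype.card_fin, Nat.sub_add_cancel (by simpa using card_le_univ S)]

theorem exists_isOutForest_card_add_card_basisClassFinset :
    ∃ F, IsOutForest a F ∧ #F + #(basisClassFinset a) = n := by
  obtain ⟨S, -, hinj, himage⟩ := exists_subset_injOn_image_eq_of_surjOn
    {v | IsBasisVertex a v} (basisClassFinset a)
    (by simpa [basisClassFinset] using Set.surjOn_image (strongClass a) _)
  refine himage ▸ (card_image_of_injOn hinj).symm ▸ exists_isOutForest_of_reach S fun u => ?_
  obtain ⟨v, hv, hvu⟩ := exists_isBasisVertex_reach (a := a) u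
  obtain ⟨s, hs, hsv⟩ := mem_image.mp (himage ▸ strongClass_mem_basisClassFinset hv)
  exact ⟨s, hs, (strongClass_eq_iff.mp hsv).1.trans hvu⟩

theorem card_rootsOf_le_of_mem_maxForests (hF : F ∈ maxForests a) :
    #(rootsOf F) ≤ #(basisClassFinset a) := by
  obtain ⟨hF, hcard⟩ := mem_maxForests.mp hF
  obtain ⟨G, hG, hGcard⟩ := exists_isOutForest_card_add_card_basisClassFinset (a := a)
  have := card_le_maxForestSize hG
  have := hF.card_add_card_rootsOf
  omega

theorem filter_isBasisVertex_rootsOf_of_mem_maxForests (hF : F ∈ maxForests a) :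
    (rootsOf F).filter (IsBasisVertex a) = rootsOf F :=
  eq_of_subset_of_card_le (filter_subset _ _)
    ((card_rootsOf_le_of_mem_maxForests hF).trans
      (card_le_card_of_surjOn _ (mem_maxForests.mp hF).1.surjOn_strongClass_rootsOf))

theorem isBasisVertex_of_mem_rootsOf (hF : F ∈ maxForests a) {r : Fin n} (hr : r ∈ rootsOf F) :
    IsBasisVertex a r :=
  (mem_filter.mp ((filter_isBasisVertex_rootsOf_of_mem_maxForests hF).symm ▸ hr)).2

theorem injOn_strongClass_rootsOf (hF : F ∈ maxForests a) :
    Set.InjOn (strongClass a) (rootsOf F) := by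
  have hsurj := (mem_maxForests.mp hF).1.surjOn_strongClass_rootsOf
  rw [filter_isBasisVertex_rootsOf_of_mem_maxForests hF] at hsurj
  exact injOn_of_surjOn_of_card_le _
    (fun r hr => strongClass_mem_basisClassFinset (isBasisVertex_of_mem_rootsOf hF hr))
    hsurj (card_rootsOf_le_of_mem_maxForests hF)

theorem inTreeRootedAt_of_mem_maxForests (hF : F ∈ maxForests a) (hG : G ∈ maxForests a)
    {i j : Fin n} (hi : InTreeRootedAt F i i) (hji : InTreeRootedAt G j i) :
    InTreeRootedAt F i j := by
  have hi_basis : IsBasisVertex a i := isBasisVertex_of_mem_rootsOf hF (mem_rootsOf.mpr hi.1)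
  have hj_basis : IsBasisVertex a j := isBasisVertex_of_mem_rootsOf hG (mem_rootsOf.mpr hji.1)
  have hreach_ji : Reach a j i := (mem_maxForests.mp hG).1.reach_of_reflTransGen hji.2
  obtain ⟨r, hr, hrj⟩ := (mem_maxForests.mp hF).1.exists_root_reflTransGen j
  have hreach_rj : Reach a r j := (mem_maxForests.mp hF).1.reach_of_reflTransGen hrj
  have hri : r = i := injOn_strongClass_rootsOf hF hr (mem_rootsOf.mpr hi.1)
    (strongClass_eq_iff.mpr ⟨hreach_rj.trans hreach_ji,
      (hi_basis j hreach_ji).trans (hj_basis r hreach_rj)⟩)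
  exact ⟨hi.1, hri ▸ hrj⟩

end

theorem barJ_diag_dominance_general {n : ℕ} (a : Matrix (Fin n) (Fin n) ℝ)
    (i j : Fin n) :
    barJ a j i ≤ barJ a i i ∧ (0 < barJ a i j → barJ a i i = barJ a j i) := by
  classical
  simp only [barJ, Matrix.of_apply]
  have hweight : ∀ F ∈ maxForests a, 0 ≤ forestWeight a F := fun F hF =>
    (mem_maxForests.mp hF).1.forestWeight_nonneg
  refine ⟨div_le_div_of_nonneg_right (sum_le_sum_of_subset_of_nonneg ?_ ?_)
    (sum_nonneg hweight), fun hpos => ?_⟩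
  · exact fun F hF => mem_filter.mpr ⟨(mem_filter.mp hF).1, (mem_filter.mp hF).2.1, .refl⟩
  · exact fun F hF _ => hweight F (mem_filter.mp hF).1
  obtain ⟨G, hG⟩ := nonempty_of_sum_ne_zero (div_ne_zero_iff.mp hpos.ne').1
  rw [mem_filter] at hG
  congr 2
  refine filter_congr fun F hF => ⟨fun hi => ?_, fun hij => ⟨hij.1, .refl⟩⟩
  exact inTreeRootedAt_of_mem_maxForests hF hG.1 hi hG.2

/-- For all vertices `i, j`: `J̄_{ii} ≥ J̄_{ji}`, and if `J̄_{ij} > 0` then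
`J̄_{ii} = J̄_{ji}`. -/
theorem barJ_diag_dominance {n : ℕ} (a : Matrix (Fin n) (Fin n) ℝ)
    (hnn : ∀ i j, 0 ≤ a i j) (i j : Fin n) :
    barJ a j i ≤ barJ a i i ∧ (0 < barJ a i j → barJ a i i = barJ a j i) :=
  barJ_diag_dominance_general a i j
end

section
/- Let L̃ be a standardized Laplacian matrix of order n, J the n×n matrix with all entries 1/n, K = I − J, P = L̃ + J, and L̃_c = K − L̃. Then for every λ ∉ {0,1}: λ is an eigenvalue of L̃ iff λ is an eigenvalue of P iff 1−λ is an eigenvalue of L̃_c, and these eigenvalues have the same geometric multiplicity. Moreover, v is an eigenvector of L̃ for λ iff x = (I − J/(1−λ))v is an eigenvector of P for λ and of L̃_c for 1−λ. -/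
open Finset

/-- A standardized Laplacian matrix of order `n`: zero row sums and
off-diagonal entries in `[−1/n, 0]`. -/
def IsStdLaplacian {n : ℕ} (L : Matrix (Fin n) (Fin n) ℝ) : Prop :=
  (∀ i, ∑ j, L i j = 0) ∧ ∀ i j, i ≠ j → -(1 / n) ≤ L i j ∧ L i j ≤ 0

/-- `μ` is an eigenvalue of the complex matrix `A`. -/
def IsEig {n : ℕ} (A : Matrix (Fin n) (Fin n) ℂ) (μ : ℂ) : Prop :=
  ∃ v : Fin n → ℂ, v ≠ 0 ∧ A.mulVec v = μ • v

/-- The geometric multiplicity of `μ` as an eigenvalue of `A`. -/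
noncomputable def geomMult {n : ℕ} (A : Matrix (Fin n) (Fin n) ℂ) (μ : ℂ) : ℕ :=
  Module.finrank ℂ (LinearMap.ker (A - μ • (1 : Matrix (Fin n) (Fin n) ℂ)).mulVecLin)

/-!
Write `J` for the matrix with all entries `1/n`. Zero row sums give `L̃ J = 0`, and
`J² = J`. For `λ ∉ {0, 1}` the matrix `T = I − J/(1−λ)` is therefore invertible, with
inverse `I − J/λ`, and `(P − λ) T = L̃ − λ`; so `T` maps the `λ`-eigenspace of `L̃`
isomorphically onto that of `P`. Finally `L̃_c = I − P`, whose `(1−λ)`-eigenspace is the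
`λ`-eigenspace of `P`.
-/

open Matrix

section Idempotent

variable {K R : Type*} [Field K] [Ring R] [Algebra K R] {e : R}

theorem IsIdempotentElem.one_sub_smul_mul_one_sub_smul (he : IsIdempotentElem e) (a b : K) :
    (1 - a • e) * (1 - b • e) = 1 - (a + b - a * b) • e := by
  simp only [mul_sub, sub_mul, one_mul, mul_one, smul_mul_smul, he.eq]
  module

theorem IsIdempotentElem.isUnit_one_sub_smul (he : IsIdempotentElem e) {a b : K}
    (hab : a + b = a * b) : IsUnit (1 - a • e) :=
  ⟨⟨_, 1 - b • e,
    by rw [he.one_sub_smul_mul_one_sub_smul, hab, sub_self, zero_smul, sub_zero],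
    by rw [he.one_sub_smul_mul_one_sub_smul, add_comm, mul_comm, hab, sub_self, zero_smul,
      sub_zero]⟩, rfl⟩

theorem IsIdempotentElem.add_sub_smul_one_mul_one_sub_smul (he : IsIdempotentElem e) {m : R}
    (hme : m * e = 0) {μ : K} (hμ : μ ≠ 1) :
    (m + e - μ • 1) * (1 - (1 - μ)⁻¹ • e) = m - μ • 1 := by
  have hc : 1 - (1 - μ)⁻¹ + μ * (1 - μ)⁻¹ = 0 := by
    field_simp [sub_ne_zero.mpr hμ.symm]
    ring
  calc (m + e - μ • 1) * (1 - (1 - μ)⁻¹ • e)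
      = m - μ • 1 + (1 - (1 - μ)⁻¹ + μ * (1 - μ)⁻¹) • e := by
        simp only [mul_sub, add_mul, sub_mul, mul_one, mul_smul_comm, smul_mul_assoc, one_mul,
          hme, he.eq]
        module
    _ = m - μ • 1 := by rw [hc, zero_smul, add_zero]

end Idempotent

namespace Matrix

theorem mul_of_const_eq_zero {ι R : Type*} [Fintype ι] [Semiring R] {A : Matrix ι ι R}
    (hA : ∀ i, ∑ j, A i j = 0) (c : R) : A * of (fun _ _ => c) = 0 := by
  ext i j
  simp [mul_apply, ← Finset.sum_mul, hA]

theorem isIdempotentElem_of_const_inv_card (ι K : Type*) [Fintype ι] [Field K] [CharZero K] :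
    IsIdempotentElem (of fun _ _ => (Fintype.card ι : K)⁻¹ : Matrix ι ι K) := by
  cases isEmpty_or_nonempty ι
  · exact Subsingleton.elim _ _
  ext i j
  simp [mul_apply]

variable {ι K : Type*} [Fintype ι] [DecidableEq ι] [Field K] {A B T : Matrix ι ι K} {μ ν : K}

theorem mem_ker_mulVecLin_sub_smul_one_iff {v : ι → K} :
    v ∈ LinearMap.ker (A - μ • 1).mulVecLin ↔ A *ᵥ v = μ • v := by
  rw [LinearMap.mem_ker, mulVecLin_apply, sub_mulVec, smul_mulVec, one_mulVec, sub_eq_zero]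

theorem one_sub_mulVec_eq_smul_iff {v : ι → K} :
    (1 - A) *ᵥ v = (1 - μ) • v ↔ A *ᵥ v = μ • v := by
  rw [sub_mulVec, one_mulVec, sub_smul, one_smul, sub_right_inj]

theorem mulVec_mulVec_eq_smul_iff_of_sub_smul_one_mul (h : (A - μ • 1) * T = B - ν • 1)
    (v : ι → K) : A *ᵥ (T *ᵥ v) = μ • (T *ᵥ v) ↔ B *ᵥ v = ν • v := by
  rw [← mem_ker_mulVecLin_sub_smul_one_iff, ← mem_ker_mulVecLin_sub_smul_one_iff, ← h,
    LinearMap.mem_ker, LinearMap.mem_ker, mulVecLin_mul, LinearMap.comp_apply, mulVecLin_apply]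
  rfl

theorem finrank_ker_mulVecLin_mul_of_isUnit (hT : IsUnit T) :
    Module.finrank K (LinearMap.ker (A * T).mulVecLin) =
      Module.finrank K (LinearMap.ker A.mulVecLin) := by
  have := hT.invertible
  rw [mulVecLin_mul, LinearMap.ker_comp, ← toLin'_apply', ← T.toLinearEquiv'_apply this,
    Submodule.comap_equiv_eq_map_symm, LinearEquiv.finrank_map_eq]

end Matrix

section Eigen

variable {n : ℕ} {A B T : Matrix (Fin n) (Fin n) ℂ} {μ ν : ℂ}

theorem isEig_iff_geomMult_pos : IsEig A μ ↔ 0 < geomMult A μ := by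
  rw [geomMult, pos_iff_ne_zero, Ne, Submodule.finrank_eq_zero, ← Ne, Submodule.ne_bot_iff]
  simp only [mem_ker_mulVecLin_sub_smul_one_iff, IsEig]
  exact exists_congr fun v => and_comm

theorem geomMult_eq_of_sub_smul_one_mul (hT : IsUnit T) (h : (A - μ • 1) * T = B - ν • 1) :
    geomMult A μ = geomMult B ν := by
  rw [geomMult, geomMult, ← h, finrank_ker_mulVecLin_mul_of_isUnit hT]

theorem geomMult_one_sub : geomMult (1 - A) (1 - μ) = geomMult A μ := by
  have hker : LinearMap.ker ((1 - A) - (1 - μ) • 1).mulVecLin =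
      LinearMap.ker (A - μ • 1).mulVecLin := by
    ext v
    simp only [mem_ker_mulVecLin_sub_smul_one_iff, one_sub_mulVec_eq_smul_iff]
  rw [geomMult, geomMult, hker]

end Eigen

/-- For `λ ∉ {0,1}`: `λ ∈ sp L̃ ⟺ λ ∈ sp P ⟺ 1−λ ∈ sp L̃_c`, where
`P = L̃ + J` and `L̃_c = (I − J) − L̃`, with equal geometric multiplicities;
moreover `v` is an eigenvector of `L̃` for `λ` iff `x = (I − J/(1−λ)) v` is an
eigenvector of `P` for `λ` and of `L̃_c` for `1−λ`. -/
theorem std_laplacian_spectra {n : ℕ} (L : Matrix (Fin n) (Fin n) ℝ)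
    (hL : IsStdLaplacian L) (lam : ℂ) (h0 : lam ≠ 0) (h1 : lam ≠ 1) :
    let M : Matrix (Fin n) (Fin n) ℂ := L.map Complex.ofReal
    let Jc : Matrix (Fin n) (Fin n) ℂ := Matrix.of fun _ _ => (n : ℂ)⁻¹
    let P : Matrix (Fin n) (Fin n) ℂ := M + Jc
    let Lc : Matrix (Fin n) (Fin n) ℂ := ((1 : Matrix (Fin n) (Fin n) ℂ) - Jc) - M
    (IsEig M lam ↔ IsEig P lam) ∧ (IsEig M lam ↔ IsEig Lc (1 - lam)) ∧
    geomMult M lam = geomMult P lam ∧ geomMult M lam = geomMult Lc (1 - lam) ∧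
    ∀ v : Fin n → ℂ,
      ((v ≠ 0 ∧ M.mulVec v = lam • v) ↔
        (((1 : Matrix (Fin n) (Fin n) ℂ) - (1 - lam)⁻¹ • Jc).mulVec v ≠ 0 ∧
         P.mulVec  (((1 : Matrix (Fin n) (Fin n) ℂ) - (1 - lam)⁻¹ • Jc).mulVec v) =
           lam • (((1 : Matrix (Fin n) (Fin n) ℂ) - (1 - lam)⁻¹ • Jc).mulVec v) ∧
         Lc.mulVec (((1 : Matrix (Fin n) (Fin n) ℂ) - (1 - lam)⁻¹ • Jc).mulVec v) =
           (1 - lam) • (((1 : Matrix (Fin n) (Fin n) ℂ) - (1 - lam)⁻¹ • Jc).mulVec v))) := by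
  intro M Jc P Lc
  have h1' : 1 - lam ≠ 0 := sub_ne_zero.mpr h1.symm
  have hJ : IsIdempotentElem Jc := by
    simpa using isIdempotentElem_of_const_inv_card (Fin n) ℂ
  have hMJ : M * Jc = 0 :=
    mul_of_const_eq_zero (fun i => by simp [M, ← Complex.ofReal_sum, hL.1 i]) _
  have hT : IsUnit (1 - (1 - lam)⁻¹ • Jc) :=
    hJ.isUnit_one_sub_smul (b := lam⁻¹) (by field_simp [h0, h1']; ring)
  have hPM : (P - lam • 1) * (1 - (1 - lam)⁻¹ • Jc) = M - lam • 1 :=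
    hJ.add_sub_smul_one_mul_one_sub_smul hMJ h1
  have hLc : Lc = 1 - P := by simp only [Lc, P]; abel
  have hPM_geom : geomMult P lam = geomMult M lam := geomMult_eq_of_sub_smul_one_mul hT hPM
  have hLcP_geom : geomMult Lc (1 - lam) = geomMult P lam := hLc ▸ geomMult_one_sub
  simp only [isEig_iff_geomMult_pos, hLcP_geom, hPM_geom, true_and]
  intro v
  rw [hLc, one_sub_mulVec_eq_smul_iff, and_self,
    mulVec_mulVec_eq_smul_iff_of_sub_smul_one_mul hPM,
    (mulVec_injective_iff_isUnit.mpr hT).ne_iff' (mulVec_zero _)]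
end

section
/- Let h(n) = sup of Im(λ) over eigenvalues λ of all standardized Laplacian matrices of order n. Then lim_{n→∞} h(n) = 1/π. -/
open Finset

/-- `h(n)`: the supremum of imaginary parts of eigenvalues of standardized
Laplacian matrices of order `n`. -/
noncomputable def hSup (n : ℕ) : ℝ :=
  sSup {y : ℝ | ∃ L : Matrix (Fin n) (Fin n) ℝ, IsStdLaplacian L ∧
    ∃ (lam : ℂ) (v : Fin n → ℂ), v ≠ 0 ∧
      (L.map Complex.ofReal).mulVec v = lam • v ∧ y = lam.im}

/-!
Upper bound: if `L v = λ v` with `v j = r j * exp (θ j * I)`, then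
`2 * Im λ * ‖v‖² = ∑ (L i j - L j i) * r i * r j * sin (θ j - θ i)` and `|L i j - L j i| ≤ 1 / n`.
The kernel `2 / π - |sin x|` is positive semidefinite, being `∫₀^{π/2} K_s(x) sin s ds` where
`K_s` is the autocorrelation over one period of the centred indicator of `[0, s) + πℤ`. Hence
`∑ r i * r j * |sin (θ j - θ i)| ≤ 2 / π * (∑ r i)² ≤ 2 / π * n * ‖v‖²`, that is `Im λ ≤ 1 / π`.

Lower bound: the circulant `(1 / n) (k I - C - ⋯ - C^k)`, `k = (n - 1) / 2`, has the eigenvector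
`(ζ^j)_j`, `ζ = exp (-2πi / n)`, whose eigenvalue has imaginary part
`∑_{m=1}^{k} sin (2πm / n) / n = (cos (π / n) - cos ((2k + 1) π / n)) / (2 n sin (π / n)) → 1 / π`.
-/

open Real MeasureTheory Filter Topology
open intervalIntegral (integral_add_adjacent_intervals integral_congr_Ioo_of_le
  integral_eq_sub_of_hasDerivAt integral_comp_sub_right)

lemma intervalIntegrable_of_abs_le {f : ℝ → ℝ} (hf : Measurable f) {C : ℝ} (hC : ∀ x, |f x| ≤ C)
    (a b : ℝ) : IntervalIntegrable f volume a b :=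
  intervalIntegrable_const.mono_fun' hf.aestronglyMeasurable (.of_forall hC)

lemma Function.Periodic.intervalIntegral_comp_sub {E : Type*} [NormedAddCommGroup E]
    [NormedSpace ℝ E] {f : ℝ → E} {T : ℝ} (hf : Function.Periodic f T) (a : ℝ) :
    ∫ t in (0)..T, f (t - a) = ∫ t in (0)..T, f t := by
  rw [integral_comp_sub_right, zero_sub, ← neg_add_eq_sub]
  exact hf.intervalIntegral_add_eq (-a) 0 |>.trans (by rw [zero_add])

lemma integral_eq_of_forall_mem_Ioo {f : ℝ → ℝ} {a b c : ℝ} (hab : a ≤ b)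
    (h : ∀ u ∈ Set.Ioo a b, f u = c) : ∫ u in a..b, f u = (b - a) * c := by
  rw [integral_congr_Ioo_of_le hab h, intervalIntegral.integral_const, smul_eq_mul]

noncomputable def indicatorModPi (s u : ℝ) : ℝ := if toIcoMod pi_pos 0 u < s then 1 else 0

lemma indicatorModPi_periodic (s : ℝ) : Function.Periodic (indicatorModPi s) π := fun u => by
  simp only [indicatorModPi, toIcoMod_add_right]

@[fun_prop]
lemma measurable_indicatorModPi (s : ℝ) : Measurable (indicatorModPi s) := by
  unfold indicatorModPi
  simp_rw [toIcoMod_eq_fract_mul]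
  exact Measurable.ite (measurableSet_lt (by fun_prop) measurable_const) measurable_const
    measurable_const

lemma abs_indicatorModPi_le (s u : ℝ) : |indicatorModPi s u| ≤ 1 := by
  unfold indicatorModPi; split_ifs <;> norm_num

lemma intervalIntegrable_indicatorModPi_comp_sub (s a x y : ℝ) :
    IntervalIntegrable (fun t => indicatorModPi s (t - a)) volume x y :=
  intervalIntegrable_of_abs_le (by fun_prop) (fun t => abs_indicatorModPi_le s (t - a)) x y

lemma intervalIntegrable_centered_indicatorModPi_mul (s c a b x y : ℝ) :
    IntervalIntegrable (fun t => (indicatorModPi s (t - a) - c) * (indicatorModPi s (t - b) - c))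
      volume x y := by
  have hbound : ∀ u, |indicatorModPi s u - c| ≤ 1 + |c| := fun u =>
    (abs_sub _ _).trans (add_le_add_left (abs_indicatorModPi_le s u) _)
  refine intervalIntegrable_of_abs_le (by fun_prop) (C := (1 + |c|) * (1 + |c|)) (fun t => ?_) x y
  rw [abs_mul]
  exact mul_le_mul (hbound _) (hbound _) (abs_nonneg _) (by positivity)

lemma intervalIntegrable_indicatorModPi_comp_sub_mul (s a b x y : ℝ) :
    IntervalIntegrable (fun t => indicatorModPi s (t - a) * indicatorModPi s (t - b))
      volume x y := by
  simpa using intervalIntegrable_centered_indicatorModPi_mul s 0 a b x y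

lemma indicatorModPi_of_mem_Ico (s : ℝ) {u : ℝ} (hu : u ∈ Set.Ico 0 π) :
    indicatorModPi s u = if u < s then 1 else 0 := by
  rw [indicatorModPi, (toIcoMod_eq_self pi_pos).2 (by rwa [zero_add])]

lemma indicatorModPi_of_mem_Ico_neg (s : ℝ) {u : ℝ} (hu : u ∈ Set.Ico (-π) 0) :
    indicatorModPi s u = if u + π < s then 1 else 0 :=
  (indicatorModPi_periodic s u).symm.trans
    (indicatorModPi_of_mem_Ico s ⟨by linarith [hu.1], by linarith [hu.2]⟩)

lemma indicatorModPi_eq_one {s u : ℝ} (hs : s ≤ π) (hu : u ∈ Set.Ioo 0 s) :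
    indicatorModPi s u = 1 := by
  rw [indicatorModPi_of_mem_Ico s ⟨hu.1.le, hu.2.trans_le hs⟩, if_pos hu.2]

lemma indicatorModPi_eq_zero {s u : ℝ} (hs : 0 ≤ s) (hu : u ∈ Set.Ioo s π) :
    indicatorModPi s u = 0 := by
  rw [indicatorModPi_of_mem_Ico s ⟨hs.trans hu.1.le, hu.2⟩, if_neg (not_lt.2 hu.1.le)]

lemma integral_zero_self_indicatorModPi_comp_sub {s y : ℝ} (hs0 : 0 ≤ s) (hs : s ≤ π / 2)
    (hy : y ∈ Set.Ico 0 π) :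
    ∫ u in (0)..s, indicatorModPi s (u - y) = max (s - y) 0 + max (s - (π - y)) 0 := by
  obtain ⟨hy0, hyπ⟩ := hy
  have hI := intervalIntegrable_indicatorModPi_comp_sub s y
  have hneg : ∀ u ∈ Set.Ioo 0 y, indicatorModPi s (u - y) = if u < s + y - π then 1 else 0 :=
    fun u hu => by
      rw [indicatorModPi_of_mem_Ico_neg s ⟨by linarith [hu.1], by linarith [hu.2]⟩]
      exact if_congr (by constructor <;> intro <;> linarith) rfl rfl
  rcases le_or_gt y s with hys | hys
  · have h0 : ∀ u ∈ Set.Ioo 0 y, indicatorModPi s (u - y) = 0 := fun u hu => by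
      rw [hneg u hu, if_neg (by linarith [hu.1])]
    have h1 : ∀ u ∈ Set.Ioo y s, indicatorModPi s (u - y) = 1 := fun u hu => by
      rw [indicatorModPi_of_mem_Ico s ⟨by linarith [hu.1], by linarith [hu.2]⟩,
        if_pos (by linarith [hu.2])]
    rw [← integral_add_adjacent_intervals (hI 0 y) (hI y s), integral_eq_of_forall_mem_Ioo hy0 h0,
      integral_eq_of_forall_mem_Ioo hys h1, max_eq_left (by linarith), max_eq_right (by linarith)]
    ring
  rcases le_or_gt y (π - s) with hyπs | hyπs
  · have h0 : ∀ u ∈ Set.Ioo 0 s, indicatorModPi s (u - y) = 0 := fun u hu => by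
      rw [hneg u ⟨hu.1, hu.2.trans hys⟩, if_neg (by linarith [hu.1])]
    rw [integral_eq_of_forall_mem_Ioo hs0 h0, max_eq_right (by linarith),
      max_eq_right (by linarith)]
    ring
  · have h1 : ∀ u ∈ Set.Ioo 0 (s + y - π), indicatorModPi s (u - y) = 1 := fun u hu => by
      rw [hneg u ⟨hu.1, by linarith [hu.2]⟩, if_pos hu.2]
    have h0 : ∀ u ∈ Set.Ioo (s + y - π) s, indicatorModPi s (u - y) = 0 := fun u hu => by
      rw [hneg u ⟨by linarith [hu.1], hu.2.trans hys⟩, if_neg (by linarith [hu.1])]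
    rw [← integral_add_adjacent_intervals (hI 0 (s + y - π)) (hI _ s),
      integral_eq_of_forall_mem_Ioo (by linarith) h1,
      integral_eq_of_forall_mem_Ioo (by linarith) h0, max_eq_right (by linarith), max_eq_left (by linarith)]
    ring

lemma integral_indicatorModPi_mul_comp_sub {s : ℝ} (hs0 : 0 ≤ s) (hs : s ≤ π / 2) (x : ℝ) :
    ∫ u in (0)..π, indicatorModPi s u * indicatorModPi s (u - x) =
      max (s - toIcoMod pi_pos 0 x) 0 + max (s - (π - toIcoMod pi_pos 0 x)) 0 := by
  set y := toIcoMod pi_pos 0 x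
  have hy : y ∈ Set.Ico 0 π := toIcoMod_mem_Ico' pi_pos x
  have hxy : ∀ u, indicatorModPi s (u - x) = indicatorModPi s (u - y) := fun u => by
    rw [show u - x = u - y - toIcoDiv pi_pos 0 x • π by rw [← self_sub_toIcoMod]; ring,
      (indicatorModPi_periodic s).sub_zsmul_eq]
  have hI : ∀ a b, IntervalIntegrable (fun u => indicatorModPi s u * indicatorModPi s (u - y))
      volume a b := by simpa using intervalIntegrable_indicatorModPi_comp_sub_mul s 0 y
  have h1 : ∀ u ∈ Set.Ioo 0 s,
      indicatorModPi s u * indicatorModPi s (u - y) = indicatorModPi s (u - y) := fun u hu => by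
    rw [indicatorModPi_eq_one (by linarith [pi_pos]) hu, one_mul]
  have h0 : ∀ u ∈ Set.Ioo s π, indicatorModPi s u * indicatorModPi s (u - y) = 0 := fun u hu => by
    rw [indicatorModPi_eq_zero hs0 hu, zero_mul]
  simp_rw [hxy]
  rw [← integral_add_adjacent_intervals (hI 0 s) (hI s π),
    integral_eq_of_forall_mem_Ioo (by linarith [pi_pos]) h0, integral_congr_Ioo_of_le hs0 h1,
    integral_zero_self_indicatorModPi_comp_sub hs0 hs hy]
  ring

lemma integral_indicatorModPi_comp_sub {s : ℝ} (hs0 : 0 ≤ s) (hs : s ≤ π) (a : ℝ) :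
    ∫ t in (0)..π, indicatorModPi s (t - a) = s := by
  have hI : ∀ x y, IntervalIntegrable (indicatorModPi s) volume x y := by
    simpa using intervalIntegrable_indicatorModPi_comp_sub s 0
  rw [(indicatorModPi_periodic s).intervalIntegral_comp_sub,
    ← integral_add_adjacent_intervals (hI 0 s) (hI s π),
    integral_eq_of_forall_mem_Ioo hs0 fun _ => indicatorModPi_eq_one hs,
    integral_eq_of_forall_mem_Ioo hs fun _ => indicatorModPi_eq_zero hs0]
  ring

noncomputable def tentKernel (s x : ℝ) : ℝ :=
  max (s - toIcoMod pi_pos 0 x) 0 + max (s - (π - toIcoMod pi_pos 0 x)) 0 - s ^ 2 / π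

lemma integral_centered_indicatorModPi_mul {s : ℝ} (hs0 : 0 ≤ s) (hs : s ≤ π / 2) (a b : ℝ) :
    ∫ t in (0)..π, (indicatorModPi s (t - a) - s / π) * (indicatorModPi s (t - b) - s / π) =
      tentKernel s (b - a) := by
  have hab : ∫ t in (0)..π, indicatorModPi s (t - a) * indicatorModPi s (t - b) =
      ∫ t in (0)..π, indicatorModPi s t * indicatorModPi s (t - (b - a)) := by
    have hper :
        Function.Periodic (fun t => indicatorModPi s t * indicatorModPi s (t - (b - a))) π :=
      (indicatorModPi_periodic s).mul ((indicatorModPi_periodic s).sub_const _)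
    rw [← hper.intervalIntegral_comp_sub a]
    simp only [sub_sub, add_sub_cancel]
  have hA := intervalIntegrable_indicatorModPi_comp_sub s a 0 π
  have hB := intervalIntegrable_indicatorModPi_comp_sub s b 0 π
  have hAB := intervalIntegrable_indicatorModPi_comp_sub_mul s a b 0 π
  simp_rw [sub_mul, mul_sub]
  rw [intervalIntegral.integral_sub (hAB.sub (hA.mul_const _))
      ((hB.const_mul _).sub intervalIntegrable_const),
    intervalIntegral.integral_sub hAB (hA.mul_const _),
    intervalIntegral.integral_sub (hB.const_mul _) intervalIntegrable_const,
    intervalIntegral.integral_mul_const, intervalIntegral.integral_const_mul,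
    intervalIntegral.integral_const, hab,
    integral_indicatorModPi_mul_comp_sub hs0 hs, integral_indicatorModPi_comp_sub hs0 (by linarith),
    integral_indicatorModPi_comp_sub hs0 (by linarith), tentKernel, smul_eq_mul]
  field_simp
  ring

lemma abs_sin_eq_sin_toIcoMod (x : ℝ) : |sin x| = sin (toIcoMod pi_pos 0 x) := by
  have hy := toIcoMod_mem_Ico' pi_pos x
  conv_lhs => rw [← toIcoMod_add_toIcoDiv_zsmul pi_pos 0 x]
  rw [zsmul_eq_mul, sin_add_int_mul_pi, abs_mul, abs_neg_one_zpow, one_mul,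
    abs_of_nonneg (sin_nonneg_of_nonneg_of_le_pi hy.1 hy.2.le)]

lemma integral_sq_mul_sin : ∫ s in (0)..π / 2, s ^ 2 * sin s = π - 2 := by
  have hderiv : ∀ s ∈ Set.uIcc 0 (π / 2),
      HasDerivAt (fun s => 2 * s * sin s - (s ^ 2 - 2) * cos s) (s ^ 2 * sin s) s := fun s _ => by
    refine ((((hasDerivAt_id' s).const_mul 2).fun_mul (hasDerivAt_sin s)).fun_sub
      (((hasDerivAt_pow 2 s).sub_const 2).fun_mul (hasDerivAt_cos s))).congr_deriv ?_
    push_cast; ring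
  rw [integral_eq_sub_of_hasDerivAt hderiv
    (Continuous.intervalIntegrable (by fun_prop) _ _)]
  norm_num
  ring

lemma integral_max_sub_mul_sin {d : ℝ} (hd0 : 0 ≤ d) (hd : d ≤ π / 2) :
    ∫ s in (0)..π / 2, max (s - d) 0 * sin s = 1 - sin d := by
  have hI : ∀ a b, IntervalIntegrable (fun s => max (s - d) 0 * sin s) volume a b :=
    fun a b => Continuous.intervalIntegrable (by fun_prop) a b
  have hderiv : ∀ s ∈ Set.uIcc d (π / 2),
      HasDerivAt (fun s => sin s - (s - d) * cos s) ((s - d) * sin s) s := fun s _ =>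
    ((hasDerivAt_sin s).fun_sub (((hasDerivAt_id' s).sub_const d).fun_mul
      (hasDerivAt_cos s))).congr_deriv (by ring)
  have h0 : ∫ s in (0)..d, max (s - d) 0 * sin s = 0 := by
    rw [intervalIntegral.integral_congr (g := fun _ => 0) fun s hs => ?_,
      intervalIntegral.integral_zero]
    rw [Set.uIcc_of_le hd0] at hs
    simp [max_eq_right (sub_nonpos.2 hs.2)]
  have h1 : ∫ s in d..π / 2, max (s - d) 0 * sin s = ∫ s in d..π / 2, (s - d) * sin s := by
    refine intervalIntegral.integral_congr fun s hs => ?_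
    rw [Set.uIcc_of_le hd] at hs
    simp [max_eq_left (sub_nonneg.2 hs.1)]
  rw [← integral_add_adjacent_intervals (hI 0 d) (hI d _), h0, h1,
    integral_eq_sub_of_hasDerivAt hderiv
      (Continuous.intervalIntegrable (by fun_prop) _ _)]
  simp

lemma integral_max_sub_mul_sin_of_le {d : ℝ} (hd : π / 2 ≤ d) :
    ∫ s in (0)..π / 2, max (s - d) 0 * sin s = 0 := by
  rw [intervalIntegral.integral_congr (g := fun _ => 0) fun s hs => ?_,
    intervalIntegral.integral_zero]
  rw [Set.uIcc_of_le (by positivity)] at hs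
  simp [max_eq_right (by linarith [hs.2] : s - d ≤ 0)]

lemma integral_tentKernel_mul_sin (x : ℝ) :
    ∫ s in (0)..π / 2, tentKernel s x * sin s = 2 / π - |sin x| := by
  have hy : toIcoMod pi_pos 0 x ∈ Set.Ico 0 π := toIcoMod_mem_Ico' pi_pos x
  simp_rw [tentKernel, abs_sin_eq_sin_toIcoMod, sub_mul, add_mul, div_mul_eq_mul_div]
  generalize toIcoMod pi_pos 0 x = y at hy ⊢
  have hI : ∀ d, IntervalIntegrable (fun s => max (s - d) 0 * sin s) volume 0 (π / 2) :=
    fun d => Continuous.intervalIntegrable (by fun_prop) _ _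
  have htent : (∫ s in (0)..π / 2, max (s - y) 0 * sin s) +
      (∫ s in (0)..π / 2, max (s - (π - y)) 0 * sin s) = 1 - sin y := by
    rcases le_total y (π / 2) with h | h
    · rw [integral_max_sub_mul_sin hy.1 h, integral_max_sub_mul_sin_of_le (by linarith), add_zero]
    · rw [integral_max_sub_mul_sin_of_le h, integral_max_sub_mul_sin (by linarith [hy.2])
        (by linarith), sin_pi_sub, zero_add]
  rw [intervalIntegral.integral_sub ((hI _).add (hI _))
      (Continuous.intervalIntegrable (by fun_prop) _ _),
    intervalIntegral.integral_add (hI _) (hI _), htent, intervalIntegral.integral_div,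
    integral_sq_mul_sin]
  field_simp
  ring

@[fun_prop]
lemma continuous_tentKernel (x : ℝ) : Continuous fun s => tentKernel s x := by
  unfold tentKernel; fun_prop

lemma intervalIntegral_sum_sum {ι E : Type*} [Fintype ι] [NormedAddCommGroup E] [NormedSpace ℝ E]
    {a b : ℝ} {g : ι → ι → ℝ → E}
    (hg : ∀ i j, IntervalIntegrable (g i j) volume a b) :
    ∫ t in a..b, ∑ i, ∑ j, g i j t = ∑ i, ∑ j, ∫ t in a..b, g i j t := by
  simp_rw [← Fintype.sum_prod_type']
  exact intervalIntegral.integral_finsetSum fun p _ => hg p.1 p.2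

lemma sum_sum_mul_integral_mul_nonneg {ι : Type*} [Fintype ι] (r : ι → ℝ) {f : ι → ℝ → ℝ}
    {a b : ℝ} (hab : a ≤ b) (hf : ∀ i j, IntervalIntegrable (fun t => f i t * f j t) volume a b) :
    0 ≤ ∑ i, ∑ j, r i * r j * ∫ t in a..b, f i t * f j t := by
  have hsq : ∀ t, (∑ i, r i * f i t) ^ 2 = ∑ i, ∑ j, r i * r j * (f i t * f j t) := fun t => by
    rw [sq, sum_mul_sum]
    exact sum_congr rfl fun i _ => sum_congr rfl fun j _ => by ring
  calc 0 ≤ ∫ t in a..b, (∑ i, r i * f i t) ^ 2 :=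
        intervalIntegral.integral_nonneg hab fun t _ => sq_nonneg _
    _ = ∑ i, ∑ j, ∫ t in a..b, r i * r j * (f i t * f j t) := by
        simp_rw [hsq]
        exact intervalIntegral_sum_sum fun i j => (hf i j).const_mul _
    _ = ∑ i, ∑ j, r i * r j * ∫ t in a..b, f i t * f j t := by
        simp_rw [intervalIntegral.integral_const_mul]

lemma sum_sum_mul_tentKernel_nonneg {ι : Type*} [Fintype ι] (r θ : ι → ℝ) {s : ℝ}
    (hs0 : 0 ≤ s) (hs : s ≤ π / 2) :
    0 ≤ ∑ i, ∑ j, r i * r j * tentKernel s (θ j - θ i) := by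
  simpa only [integral_centered_indicatorModPi_mul hs0 hs] using
    sum_sum_mul_integral_mul_nonneg r (f := fun i t => indicatorModPi s (t - θ i) - s / π)
      pi_pos.le fun i j => intervalIntegrable_centered_indicatorModPi_mul s _ _ _ _ _

theorem sum_sum_mul_abs_sin_sub_le {ι : Type*} [Fintype ι] (r θ : ι → ℝ) :
    ∑ i, ∑ j, r i * r j * |sin (θ j - θ i)| ≤ 2 / π * (∑ i, r i) ^ 2 := by
  have hrep : ∑ i, ∑ j, r i * r j * (2 / π - |sin (θ j - θ i)|) =
      ∫ s in (0)..π / 2, (∑ i, ∑ j, r i * r j * tentKernel s (θ j - θ i)) * sin s := by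
    simp_rw [sum_mul, mul_assoc]
    rw [intervalIntegral_sum_sum fun i j =>
      (Continuous.intervalIntegrable (by fun_prop) _ _).const_mul _]
    simp_rw [intervalIntegral.integral_const_mul, integral_tentKernel_mul_sin]
  have hnonneg : 0 ≤ ∑ i, ∑ j, r i * r j * (2 / π - |sin (θ j - θ i)|) := by
    rw [hrep]
    refine intervalIntegral.integral_nonneg (by positivity) fun s hs => ?_
    exact mul_nonneg (sum_sum_mul_tentKernel_nonneg r θ hs.1 hs.2)
      (sin_nonneg_of_nonneg_of_le_pi hs.1 (by linarith [hs.2, pi_pos]))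
  have hexpand : ∑ i, ∑ j, r i * r j * (2 / π - |sin (θ j - θ i)|) =
      2 / π * (∑ i, r i) ^ 2 - ∑ i, ∑ j, r i * r j * |sin (θ j - θ i)| := by
    simp_rw [mul_sub, sum_sub_distrib, sq, sum_mul_sum, mul_sum]
    exact congrArg₂ _ (sum_congr rfl fun i _ => sum_congr rfl fun j _ => by ring) rfl
  linarith

lemma Complex.im_conj_mul (z w : ℂ) :
    ((starRingEnd ℂ) z * w).im = ‖z‖ * ‖w‖ * Real.sin (w.arg - z.arg) := by
  rw [Real.sin_sub, Complex.mul_im, Complex.conj_re, Complex.conj_im, ← Complex.norm_mul_cos_arg z,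
    ← Complex.norm_mul_sin_arg z, ← Complex.norm_mul_cos_arg w, ← Complex.norm_mul_sin_arg w]
  ring

lemma im_mul_sum_sq_norm_eq {ι : Type*} [Fintype ι] {L : Matrix ι ι ℝ} {lam : ℂ} {v : ι → ℂ}
    (heig : (L.map Complex.ofReal).mulVec v = lam • v) :
    lam.im * ∑ i, ‖v i‖ ^ 2 = ∑ i, ∑ j, L i j * ((starRingEnd ℂ) (v i) * v j).im := by
  have h : ∑ i, (starRingEnd ℂ) (v i) * ∑ j, (L i j : ℂ) * v j =
      lam * ((∑ i, ‖v i‖ ^ 2 : ℝ) : ℂ) := by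
    push_cast
    rw [mul_sum]
    refine sum_congr rfl fun i _ => ?_
    have hi : ∑ j, (L i j : ℂ) * v j = lam * v i := by
      simpa [Matrix.mulVec, dotProduct] using congrFun heig i
    rw [hi, ← Complex.mul_conj', mul_comm (v i)]
    ring
  have him := congrArg Complex.im h
  rw [Complex.im_mul_ofReal, Complex.im_sum] at him
  rw [← him]
  refine sum_congr rfl fun i _ => ?_
  rw [mul_sum, Complex.im_sum]
  refine sum_congr rfl fun j _ => ?_
  rw [mul_left_comm, Complex.im_ofReal_mul]

lemma two_mul_sum_sum_mul_of_antisymm {ι R : Type*} [Fintype ι] [CommRing R] (L t : ι → ι → R)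
    (ht : ∀ i j, t j i = -t i j) :
    2 * ∑ i, ∑ j, L i j * t i j = ∑ i, ∑ j, (L i j - L j i) * t i j := by
  have hswap : ∑ i, ∑ j, L j i * t i j = -∑ i, ∑ j, L i j * t i j := by
    rw [sum_comm, ← sum_neg_distrib]
    exact sum_congr rfl fun i _ => by
      rw [← sum_neg_distrib]
      exact sum_congr rfl fun j _ => by rw [ht i j, mul_neg]
  simp_rw [sub_mul, sum_sub_distrib, hswap]
  ring

lemma IsStdLaplacian.abs_sub_transpose_le {n : ℕ} {L : Matrix (Fin n) (Fin n) ℝ}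
    (hL : IsStdLaplacian L) (i j : Fin n) : |L i j - L j i| ≤ 1 / n := by
  rcases eq_or_ne i j with rfl | hij
  · simp
  obtain ⟨h1, h2⟩ := hL.2 i j hij
  obtain ⟨h3, h4⟩ := hL.2 j i hij.symm
  rw [abs_le]
  constructor <;> linarith

lemma IsStdLaplacian.two_mul_im_mul_le {n : ℕ} {L : Matrix (Fin n) (Fin n) ℝ}
    (hL : IsStdLaplacian L) {lam : ℂ} {v : Fin n → ℂ}
    (heig : (L.map Complex.ofReal).mulVec v = lam • v) :
    2 * (lam.im * ∑ i, ‖v i‖ ^ 2) ≤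
      1 / n * ∑ i, ∑ j, ‖v i‖ * ‖v j‖ * |sin ((v j).arg - (v i).arg)| := by
  rw [im_mul_sum_sq_norm_eq heig, two_mul_sum_sum_mul_of_antisymm (fun i j => L i j)
    (fun i j => ((starRingEnd ℂ) (v i) * v j).im) fun i j => by
      rw [← Complex.conj_im, map_mul, Complex.conj_conj, mul_comm], mul_sum]
  refine sum_le_sum fun i _ => ?_
  rw [mul_sum]
  refine sum_le_sum fun j _ => ?_
  calc (L i j - L j i) * ((starRingEnd ℂ) (v i) * v j).im
      ≤ |L i j - L j i| * |((starRingEnd ℂ) (v i) * v j).im| := by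
        rw [← abs_mul]; exact le_abs_self _
    _ ≤ 1 / n * |((starRingEnd ℂ) (v i) * v j).im| := by
        gcongr; exact hL.abs_sub_transpose_le i j
    _ = _ := by rw [Complex.im_conj_mul, abs_mul, abs_of_nonneg (by positivity)]

theorem IsStdLaplacian.im_eigenvalue_le {n : ℕ} {L : Matrix (Fin n) (Fin n) ℝ}
    (hL : IsStdLaplacian L) {lam : ℂ} {v : Fin n → ℂ} (hv : v ≠ 0)
    (heig : (L.map Complex.ofReal).mulVec v = lam • v) : lam.im ≤ 1 / π := by
  obtain ⟨i₀, hi₀⟩ := Function.ne_iff.mp hv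
  have hn : (0 : ℝ) < n := Nat.cast_pos.2 (Fin.pos i₀)
  set N := ∑ i, ‖v i‖ ^ 2
  have hN : 0 < N := lt_of_lt_of_le (pow_pos (norm_pos_iff.2 hi₀) 2)
    (single_le_sum (fun i _ => sq_nonneg ‖v i‖) (mem_univ i₀))
  have hCS : (∑ i, ‖v i‖) ^ 2 ≤ n * N := by
    simpa using sq_sum_le_card_mul_sum_sq (s := univ) (f := fun i => ‖v i‖)
  have h : 2 * (lam.im * N) ≤ 2 * (1 / π * N) := calc
    2 * (lam.im * N) ≤ 1 / n * ∑ i, ∑ j, ‖v i‖ * ‖v j‖ * |sin ((v j).arg - (v i).arg)| :=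
      hL.two_mul_im_mul_le heig
    _ ≤ 1 / n * (2 / π * (∑ i, ‖v i‖) ^ 2) := by
      gcongr; exact sum_sum_mul_abs_sin_sub_le _ _
    _ ≤ 1 / n * (2 / π * (n * N)) := by gcongr
    _ = 2 * (1 / π * N) := by field_simp
  exact le_of_mul_le_mul_right (by linarith) hN

lemma Matrix.mulVec_pow_eq_smul {n : ℕ} [NeZero n] {R : Type*} [CommRing R] (g : Fin n → R)
    {ζ : R} (hζ : ζ ^ n = 1) :
    (Matrix.of fun i j : Fin n => g (j - i)).mulVec (fun j => ζ ^ (j : ℕ)) =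
      (∑ d, g d * ζ ^ (d : ℕ)) • fun j : Fin n => ζ ^ (j : ℕ) := by
  funext i
  simp only [Matrix.mulVec, dotProduct, Matrix.of_apply, Pi.smul_apply, smul_eq_mul, sum_mul]
  rw [← Equiv.sum_comp (Equiv.addRight i)]
  refine sum_congr rfl fun d _ => ?_
  rw [Equiv.coe_addRight, add_sub_cancel_right, Fin.val_add, ← pow_eq_pow_mod _ hζ, pow_add,
    mul_assoc]

noncomputable def cyclicWeight (n d : ℕ) : ℝ :=
  if d = 0 then ((n - 1) / 2 : ℕ) / n else if d ≤ (n - 1) / 2 then -(1 / n) else 0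

noncomputable def cyclicLaplacian (n : ℕ) : Matrix (Fin n) (Fin n) ℝ :=
  Matrix.of fun i j => cyclicWeight n (j - i : Fin n)

lemma sum_cyclicWeight_mul {n : ℕ} (hn : 0 < n) (f : ℕ → ℝ) :
    ∑ d : Fin n, cyclicWeight n d * f d =
      ((n - 1) / 2 : ℕ) / n * f 0 - (∑ d ∈ range ((n - 1) / 2), f (d + 1)) / n := by
  have hzero : ∀ d ∈ range n, d ∉ range ((n - 1) / 2 + 1) → cyclicWeight n d * f d = 0 :=
    fun d _ hd => by
      simp only [mem_range, not_lt] at hd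
      simp [cyclicWeight, show d ≠ 0 by omega, show ¬d ≤ (n - 1) / 2 by omega]
  have hsucc : ∀ d ∈ range ((n - 1) / 2), cyclicWeight n (d + 1) * f (d + 1) = -(f (d + 1) / n) :=
    fun d hd => by
      simp [cyclicWeight, show d + 1 ≤ (n - 1) / 2 by simpa using mem_range.1 hd]
      ring
  rw [Fin.sum_univ_eq_sum_range (fun d => cyclicWeight n d * f d),
    ← sum_subset (range_subset_range.2 (by omega)) hzero, sum_range_succ', sum_congr rfl hsucc,
    sum_neg_distrib, ← sum_div]
  simp only [cyclicWeight, if_pos]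
  ring

lemma isStdLaplacian_cyclicLaplacian {n : ℕ} (hn : 0 < n) : IsStdLaplacian (cyclicLaplacian n) := by
  have : NeZero n := ⟨hn.ne'⟩
  refine ⟨fun i => ?_, fun i j hij => ?_⟩
  · have := sum_cyclicWeight_mul hn fun _ => 1
    simp only [mul_one, sum_const, card_range, nsmul_eq_mul] at this
    rw [cyclicLaplacian, ← Equiv.sum_comp (Equiv.addRight i)]
    simp only [Matrix.of_apply, Equiv.coe_addRight, add_sub_cancel_right, this]
    ring
  · have hd : ((j - i : Fin n) : ℕ) ≠ 0 := by
      rw [Ne, Fin.val_eq_zero_iff, sub_eq_zero]; exact hij.symm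
    have : 0 ≤ 1 / (n : ℝ) := by positivity
    simp only [cyclicLaplacian, Matrix.of_apply, cyclicWeight, if_neg hd]
    split_ifs <;> constructor <;> linarith

noncomputable def cyclicEigenIm (n : ℕ) : ℝ :=
  (∑ d ∈ range ((n - 1) / 2), sin (2 * π * (d + 1) / n)) / n

lemma exists_eigen_cyclicLaplacian {n : ℕ} (hn : 0 < n) :
    ∃ (lam : ℂ) (v : Fin n → ℂ), v ≠ 0 ∧
      ((cyclicLaplacian n).map Complex.ofReal).mulVec v = lam • v ∧ cyclicEigenIm n = lam.im := by
  have : NeZero n := ⟨hn.ne'⟩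
  set ζ := Complex.exp (-(2 * π / n * Complex.I))
  have hpow : ∀ d : ℕ, ζ ^ d = Complex.exp ((-(2 * π * d / n) : ℝ) * Complex.I) := fun d => by
    rw [← Complex.exp_nat_mul]
    push_cast
    ring_nf
  have hζ : ζ ^ n = 1 := by
    have hn' : (n : ℂ) ≠ 0 := Nat.cast_ne_zero.2 hn.ne'
    rw [← Complex.exp_nat_mul, show (n : ℂ) * -(2 * π / n * Complex.I) = -(2 * π * Complex.I) by
      field_simp, Complex.exp_neg, Complex.exp_two_pi_mul_I, inv_one]
  have hmat : (cyclicLaplacian n).map Complex.ofReal =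
      Matrix.of fun i j : Fin n => (cyclicWeight n (j - i : Fin n) : ℂ) := by
    ext i j; simp [cyclicLaplacian]
  refine ⟨∑ d : Fin n, (cyclicWeight n d : ℂ) * ζ ^ (d : ℕ), fun j => ζ ^ (j : ℕ), fun h => ?_,
    hmat ▸ Matrix.mulVec_pow_eq_smul (fun d => (cyclicWeight n d : ℂ)) hζ, ?_⟩
  · simpa using congrFun h ⟨0, hn⟩
  · simp_rw [Complex.im_sum, Complex.im_ofReal_mul, hpow, Complex.exp_ofReal_mul_I_im]
    rw [sum_cyclicWeight_mul hn (fun d => sin (-(2 * π * d / n))), cyclicEigenIm]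
    simp [neg_div]

lemma two_mul_sin_mul_sum_sin (a : ℝ) (k : ℕ) :
    2 * sin a * ∑ d ∈ range k, sin (2 * (d + 1) * a) = cos a - cos ((2 * k + 1) * a) := by
  induction k with
  | zero => simp
  | succ k ih =>
    have hstep : 2 * sin a * sin (2 * (k + 1) * a) =
        cos ((2 * k + 1) * a) - cos ((2 * (k + 1) + 1) * a) := by
      rw [cos_sub_cos, show ((2 * k + 1) * a - (2 * (k + 1) + 1) * a) / 2 = -a by ring, sin_neg]
      ring_nf
    rw [sum_range_succ, mul_add, ih, hstep]
    push_cast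
    ring

lemma cyclicEigenIm_eq {n : ℕ} (hn : 2 ≤ n) :
    cyclicEigenIm n =
      (cos (π / n) - cos ((2 * ((n - 1) / 2 : ℕ) + 1) / n * π)) / (2 * π * sinc (π / n)) := by
  have hn0 : (0 : ℝ) < n := by positivity
  have hsin : 0 < sin (π / n) := sin_pos_of_pos_of_lt_pi (by positivity) (by
    rw [div_lt_iff₀ hn0]; exact lt_mul_of_one_lt_right pi_pos (by exact_mod_cast hn))
  rw [sinc_of_ne_zero (by positivity), cyclicEigenIm, eq_div_iff (by positivity),
    show (2 * ((n - 1) / 2 : ℕ) + 1) / n * π = (2 * ((n - 1) / 2 : ℕ) + 1) * (π / n) by ring,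
    ← two_mul_sin_mul_sum_sin]
  simp_rw [show ∀ d : ℕ, 2 * ((d : ℝ) + 1) * (π / n) = 2 * π * (d + 1) / n from fun d => by ring]
  field_simp

lemma tendsto_cyclicEigenIm : Tendsto cyclicEigenIm atTop (𝓝 (1 / π)) := by
  have hπn : Tendsto (fun n : ℕ => π / n) atTop (𝓝 0) := tendsto_const_div_atTop_nhds_zero_nat π
  have hratio : Tendsto (fun n : ℕ => (2 * ((n - 1) / 2 : ℕ) + 1 : ℝ) / n) atTop (𝓝 1) := by
    refine tendsto_of_tendsto_of_tendsto_of_le_of_le' (g := fun n : ℕ => 1 - 1 / (n : ℝ))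
      (by simpa using (tendsto_one_div_atTop_nhds_zero_nat (𝕜 := ℝ)).const_sub 1)
      tendsto_const_nhds ?_ ?_ <;> filter_upwards [eventually_ge_atTop 1] with n hn
    · have h : (n : ℝ) ≤ 2 * ((n - 1) / 2 : ℕ) + 2 := by
        exact_mod_cast (by omega : n ≤ 2 * ((n - 1) / 2) + 2)
      rw [one_sub_div (by positivity), div_le_div_iff_of_pos_right (by positivity)]
      linarith
    · rw [div_le_one (by positivity)]
      exact_mod_cast (by omega : 2 * ((n - 1) / 2) + 1 ≤ n)
  have hnum : Tendsto (fun n : ℕ => cos (π / n) - cos ((2 * ((n - 1) / 2 : ℕ) + 1) / n * π))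
      atTop (𝓝 (cos 0 - cos π)) := ((continuous_cos.tendsto 0).comp hπn).sub
      ((continuous_cos.tendsto π).comp (by simpa using hratio.mul_const π))
  have hden : Tendsto (fun n : ℕ => 2 * π * sinc (π / n)) atTop (𝓝 (2 * π * sinc 0)) :=
    ((continuous_sinc.tendsto 0).comp hπn).const_mul _
  convert (hnum.div hden (by simp [pi_ne_zero])).congr' ?_ using 2
  · rw [cos_zero, cos_pi, sinc_zero]; field_simp; norm_num
  · filter_upwards [eventually_ge_atTop 2] with n hn
    exact (cyclicEigenIm_eq hn).symm

lemma hSup_le_one_div_pi (n : ℕ) : hSup n ≤ 1 / π :=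
  Real.sSup_le (by rintro _ ⟨L, hL, lam, v, hv, heig, rfl⟩; exact hL.im_eigenvalue_le hv heig)
    (by positivity)

lemma cyclicEigenIm_le_hSup {n : ℕ} (hn : 0 < n) : cyclicEigenIm n ≤ hSup n := by
  obtain ⟨lam, v, hv, heig, him⟩ := exists_eigen_cyclicLaplacian hn
  refine le_csSup ⟨1 / π, ?_⟩ ⟨_, isStdLaplacian_cyclicLaplacian hn, lam, v, hv, heig, him⟩
  rintro _ ⟨L, hL, lam, v, hv, heig, rfl⟩
  exact hL.im_eigenvalue_le hv heig

/-- `lim_{n→∞} h(n) = 1/π`. -/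
theorem hSup_tendsto : Filter.Tendsto hSup Filter.atTop (nhds (1 / Real.pi)) := by
  refine tendsto_of_tendsto_of_tendsto_of_le_of_le' tendsto_cyclicEigenIm tendsto_const_nhds ?_
    (.of_forall hSup_le_one_div_pi)
  filter_upwards [eventually_ge_atTop 1] with n hn
  exact cyclicEigenIm_le_hSup hn
end
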